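/- Let z ≥ 1 and κ : Fin z → ℝ. Define the duration-severity minimum by amin_dursev(κ) := min_i κ i if min_i κ i > 0, and amin_dursev(κ) := (1/z) · Σ_i min(κ i, 0) otherwise. Then amin_dursev(κ) ≥ 0 if and only if min_i κ i ≥ 0. -/
import Mathlib


open Classical in
/-- The duration-severity minimum operator: the true minimum when it is
positive, and otherwise the average of the negative parts `min (κ i) 0`. -/
noncomputable def aminDurSev (z : ℕ) (hz : 0 < z) (κ : Fin z → ℝ) : ℝ :=
  if 0 < Finset.univ.inf' ⟨(⟨0, hz⟩ : Fin z), Finset.mem_univ _⟩ κ then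
    Finset.univ.inf' ⟨(⟨0, hz⟩ : Fin z), Finset.mem_univ _⟩ κ
  else (1 / z : ℝ) * ∑ i, min (κ i) 0

/-- The duration-severity minimum is nonnegative iff the true
minimum is nonnegative (soundness and reverse soundness). -/
theorem aminDurSev_nonneg_iff (z : ℕ) (hz : 0 < z) (κ : Fin z → ℝ) :
    0 ≤ aminDurSev z hz κ ↔
      0 ≤ Finset.univ.inf' ⟨(⟨0, hz⟩ : Fin z), Finset.mem_univ _⟩ κ := by
  unfold aminDurSev
  set m := Finset.univ.inf' ⟨(⟨0, hz⟩ : Fin z), Finset.mem_univ _⟩ κ with hm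
  split_ifs with h
  · exact ⟨fun _ => h.le, fun _ => h.le⟩
  · push_neg at h
    have hzpos : (0:ℝ) < (1/z : ℝ) := by positivity
    constructor
    · intro hs
      have hs' : 0 ≤ ∑ i, min (κ i) 0 := nonneg_of_mul_nonneg_right hs hzpos
      have hall : ∀ i ∈ Finset.univ, min (κ i) 0 = 0 := by
        apply (Finset.sum_eq_zero_iff_of_nonpos (fun i _ => min_le_right _ _)).mp
        exact le_antisymm (Finset.sum_nonpos (fun i _ => min_le_right _ _)) hs'
      rw [hm]
      apply Finset.le_inf'
      intro i _
      have := hall i (Finset.mem_univ i)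
      have : 0 ≤ κ i := by
        by_contra hneg
        push_neg at hneg
        rw [min_eq_left hneg.le] at this
        linarith
      exact this
    · intro hmn
      have : ∀ i ∈ Finset.univ, min (κ i) 0 = 0 := by
        intro i _
        have : m ≤ κ i := Finset.inf'_le _ (Finset.mem_univ i)
        simp [min_eq_right (hmn.trans this)]
      rw [Finset.sum_eq_zero this, mul_zero]
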